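/- arXiv:2405.15094 — 2 statements merged into one kernel-verified Lean document; each statement's English description precedes it below -/
import Mathlib

section
/- Rank-one pseudoinverse derivative: let X ∈ ℝ^{n×n} and u ≠ v with χ = e_v - e_u in the row space of X. Then the derivative of the pseudoinverse map at X in the direction e_u χᵀ is d/dε|_{ε=0} (X + ε e_u χᵀ)⁺ = X⁺ (Xᵀ)⁺ χ e_uᵀ (I - X X⁺) - X⁺ e_u χᵀ X⁺. -/
open Matrix BigOperators Filter

def IsMoorePenrose {n : ℕ} (L P : Matrix (Fin n) (Fin n) ℝ) : Prop :=
  L * P * L = L ∧ P * L * P = P ∧ (L * P)ᵀ = L * P ∧ (P * L)ᵀ = P * L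

/-!
When `d` lies in the row space of `A`, Meyer's rank-one update formula gives the pseudoinverse of
`A + ε c dᵀ` in closed form as `A⁺ + ε S(ε)`, where `S` is a rational function of `ε` whose
denominator equals `1` at `ε = 0`. By uniqueness of the Moore–Penrose inverse, the difference
quotient `ε⁻¹ ((A + ε c dᵀ)⁺ - A⁺)` is `S(ε)` for all small `ε ≠ 0`, so it tends to `S(0)`,
which is the stated matrix.
-/

open Topology

section

variable {n : ℕ}

namespace IsMoorePenrose

variable {A P : Matrix (Fin n) (Fin n) ℝ}

theorem mul_pinv_mul (hP : IsMoorePenrose A P) : A * P * A = A := hP.1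

theorem pinv_mul_pinv (hP : IsMoorePenrose A P) : P * A * P = P := hP.2.1

theorem transpose_mul_pinv (hP : IsMoorePenrose A P) : (A * P)ᵀ = A * P := hP.2.2.1

theorem transpose_pinv_mul (hP : IsMoorePenrose A P) : (P * A)ᵀ = P * A := hP.2.2.2

theorem unique {P' : Matrix (Fin n) (Fin n) ℝ} (hP : IsMoorePenrose A P)
    (hP' : IsMoorePenrose A P') : P = P' := by
  obtain ⟨h1, h2, h3, h4⟩ := hP
  obtain ⟨h1', h2', h3', h4'⟩ := hP'
  have hleft : A * P = A * P' :=
    calc A * P = (A * P' * A * P)ᵀ := by rw [h1', h3]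
    _ = (A * P)ᵀ * (A * P')ᵀ := by simp only [transpose_mul]; noncomm_ring
    _ = A * P' := by rw [h3, h3', ← mul_assoc, h1]
  have hright : P * A = P' * A :=
    calc P * A = (P * (A * P' * A))ᵀ := by rw [h1', h4]
    _ = (P' * A)ᵀ * (P * A)ᵀ := by simp only [transpose_mul]; noncomm_ring
    _ = P' * A := by rw [h4, h4', mul_assoc, ← mul_assoc A, h1]
  calc P = P * A * P := h2.symm
  _ = P' * A * P' := by rw [hright, mul_assoc, hleft, ← mul_assoc]
  _ = P' := h2'

theorem mul_mul_transpose (hP : IsMoorePenrose A P) : A * P * Pᵀ = Pᵀ := by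
  rw [← hP.transpose_mul_pinv, ← transpose_mul, ← mul_assoc, hP.pinv_mul_pinv]

theorem vecMul_mul_eq_self {w : Fin n → ℝ} (hP : IsMoorePenrose A P) :
    (w ᵥ* A) ᵥ* (P * A) = w ᵥ* A := by
  rw [vecMul_vecMul, ← mul_assoc, hP.mul_pinv_mul]

end IsMoorePenrose

section RankOneUpdate

variable (A P : Matrix (Fin n) (Fin n) ℝ) (c d : Fin n → ℝ)

def rankOneUpdateDenom (ε : ℝ) : ℝ :=
  (1 + ε * (d ⬝ᵥ P *ᵥ c)) ^ 2
    + ε ^ 2 * (c ⬝ᵥ c ᵥ* (1 - A * P)) * ((d ᵥ* P) ⬝ᵥ (d ᵥ* P))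

/-- Meyer's formula (Meyer 1973, the case of `c` arbitrary and `d` in the row space of `A`):
`(A + ε c dᵀ)⁺ = A⁺ + ε • pinvRankOneSlope A A⁺ c d ε` wherever `rankOneUpdateDenom A A⁺ c d ε ≠ 0`,
with `w = (I - A A⁺) c` the part of `c` outside the column space of `A`. -/
noncomputable def pinvRankOneSlope (ε : ℝ) : Matrix (Fin n) (Fin n) ℝ :=
  let k := P *ᵥ c
  let h := d ᵥ* P
  let m := P *ᵥ h
  let w := c ᵥ* (1 - A * P)
  let β := 1 + ε * (d ⬝ᵥ k)
  (rankOneUpdateDenom A P c d ε)⁻¹ • (β • vecMulVec m w - (ε * (h ⬝ᵥ h)) • vecMulVec k w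
    - (ε * (c ⬝ᵥ w)) • vecMulVec m h - β • vecMulVec k h)

variable {A P c d}

theorem pinvRankOneSlope_mul (hP : IsMoorePenrose A P) (hd : d ᵥ* (P * A) = d) {ε : ℝ}
    (hγ : rankOneUpdateDenom A P c d ε ≠ 0) :
    (P + ε • pinvRankOneSlope A P c d ε) * (A + ε • vecMulVec c d) = P * A := by
  unfold pinvRankOneSlope
  unfold rankOneUpdateDenom at *
  set k := P *ᵥ c with hk
  set h := d ᵥ* P with hh
  set m := P *ᵥ h with hm
  set w := c ᵥ* (1 - A * P) with hw
  have hwA : w ᵥ* A = 0 := by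
    rw [hw, vecMul_vecMul, sub_mul, one_mul, hP.mul_pinv_mul, sub_self, vecMul_zero]
  have hhA : h ᵥ* A = d := by rw [hh, vecMul_vecMul, hd]
  have hhc : h ⬝ᵥ c = d ⬝ᵥ k := by rw [hk, dotProduct_mulVec, hh]
  have hwc : w ⬝ᵥ c = c ⬝ᵥ w := dotProduct_comm _ _
  simp only [mul_add, add_mul, sub_mul, smul_mul_assoc, mul_smul_comm, smul_smul,
    vecMulVec_mul, mul_vecMulVec, vecMulVec_mulVec, ← hk, hwA, hhA, hhc, hwc,
    smul_vecMulVec, vecMulVec_zero, smul_zero, op_smul_eq_smul]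
  match_scalars <;> field_simp <;> ring

theorem mul_pinvRankOneSlope_transpose (hP : IsMoorePenrose A P) {ε : ℝ}
    (hγ : rankOneUpdateDenom A P c d ε ≠ 0) :
    ((A + ε • vecMulVec c d) * (P + ε • pinvRankOneSlope A P c d ε))ᵀ
      = (A + ε • vecMulVec c d) * (P + ε • pinvRankOneSlope A P c d ε) := by
  set k := P *ᵥ c with hk
  set h := d ᵥ* P with hh
  set m := P *ᵥ h with hm
  set w := c ᵥ* (1 - A * P) with hw
  have hAk : A *ᵥ k = c - w := by
    rw [hk, mulVec_mulVec, hw, vecMul_sub, vecMul_one, ← vecMul_transpose, hP.transpose_mul_pinv,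
      sub_sub_cancel]
  have hAm : A *ᵥ m = h := by
    rw [hm, hh, ← mulVec_transpose, mulVec_mulVec, mulVec_mulVec, hP.mul_mul_transpose]
  have hdm : d ⬝ᵥ m = h ⬝ᵥ h := by rw [hm, dotProduct_mulVec, hh]
  have hexpand : (A + ε • vecMulVec c d) * (P + ε • pinvRankOneSlope A P c d ε)
      = A * P + (ε / rankOneUpdateDenom A P c d ε) •
          ((1 + ε * (d ⬝ᵥ k)) • (vecMulVec h w + vecMulVec w h)
            - (ε * (c ⬝ᵥ w)) • vecMulVec h h + (ε * (h ⬝ᵥ h)) • vecMulVec w w) := by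
    unfold pinvRankOneSlope rankOneUpdateDenom at *
    simp only [← hk, ← hh, ← hm, ← hw] at hγ ⊢
    simp only [mul_add, add_mul, mul_sub, smul_mul_assoc, mul_smul_comm, smul_smul,
      mul_vecMulVec, vecMulVec_mulVec, op_smul_eq_smul, smul_vecMulVec, hAm, hAk, hdm,
      sub_vecMulVec, smul_sub, smul_add, vecMulVec_mul, ← hh]
    match_scalars <;> field_simp <;> ring
  rw [hexpand]
  simp only [transpose_add, transpose_sub, transpose_smul, transpose_vecMulVec,
    hP.transpose_mul_pinv]
  module

theorem mul_mul_pinvRankOneSlope (hP : IsMoorePenrose A P) (ε : ℝ) :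
    P * A * pinvRankOneSlope A P c d ε = pinvRankOneSlope A P c d ε := by
  simp only [pinvRankOneSlope, mul_smul_comm, mul_sub, mul_vecMulVec, mulVec_mulVec,
    hP.pinv_mul_pinv]

theorem rankOneUpdateDenom_zero : rankOneUpdateDenom A P c d 0 = 1 := by
  simp [rankOneUpdateDenom]

theorem continuous_rankOneUpdateDenom : Continuous (rankOneUpdateDenom A P c d) := by
  unfold rankOneUpdateDenom; fun_prop

theorem continuousAt_pinvRankOneSlope_zero : ContinuousAt (pinvRankOneSlope A P c d) 0 := by
  unfold pinvRankOneSlope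
  exact (continuous_rankOneUpdateDenom.continuousAt.inv₀ (by simp [rankOneUpdateDenom_zero])).smul
    (by fun_prop)

theorem pinvRankOneSlope_zero : pinvRankOneSlope A P c d 0
    = P * Pᵀ * vecMulVec d c * (1 - A * P) - P * vecMulVec c d * P := by
  simp [pinvRankOneSlope, rankOneUpdateDenom_zero, mul_vecMulVec, vecMulVec_mul,
    ← mulVec_mulVec, mulVec_transpose]

theorem IsMoorePenrose.add_smul_vecMulVec (hP : IsMoorePenrose A P) (hd : d ᵥ* (P * A) = d)
    {ε : ℝ} (hγ : rankOneUpdateDenom A P c d ε ≠ 0) :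
    IsMoorePenrose (A + ε • vecMulVec c d) (P + ε • pinvRankOneSlope A P c d ε) := by
  have hQB := pinvRankOneSlope_mul hP hd hγ
  refine ⟨?_, ?_, mul_pinvRankOneSlope_transpose hP hγ, by rw [hQB, hP.transpose_pinv_mul]⟩
  · rw [mul_assoc, hQB, add_mul, smul_mul_assoc, vecMulVec_mul, hd, ← mul_assoc, hP.mul_pinv_mul]
  · rw [hQB, mul_add, mul_smul_comm, mul_mul_pinvRankOneSlope hP, hP.pinv_mul_pinv]

end RankOneUpdate

theorem tendsto_slope_pinv_add_smul_vecMulVec {A P : Matrix (Fin n) (Fin n) ℝ} {c d : Fin n → ℝ}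
    (hP : IsMoorePenrose A P) (hd : d ᵥ* (P * A) = d) {Pinv : ℝ → Matrix (Fin n) (Fin n) ℝ}
    (hPinv : ∀ ε : ℝ, IsMoorePenrose (A + ε • vecMulVec c d) (Pinv ε)) :
    Tendsto (fun ε : ℝ => ε⁻¹ • (Pinv ε - P)) (𝓝[≠] 0)
      (𝓝 (P * Pᵀ * vecMulVec d c * (1 - A * P) - P * vecMulVec c d * P)) := by
  rw [← pinvRankOneSlope_zero]
  have hγ : ∀ᶠ ε in 𝓝[≠] 0, rankOneUpdateDenom A P c d ε ≠ 0 := by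
    exact nhdsWithin_le_nhds (continuous_rankOneUpdateDenom.continuousAt.eventually_ne
      (by simp [rankOneUpdateDenom_zero]))
  refine (continuousAt_pinvRankOneSlope_zero.tendsto.mono_left nhdsWithin_le_nhds).congr' ?_
  filter_upwards [hγ, self_mem_nhdsWithin] with ε hγε hε
  rw [(hPinv ε).unique (hP.add_smul_vecMulVec hd hγε), add_sub_cancel_left, smul_smul,
    inv_mul_cancel₀ hε, one_smul]

end

theorem pinv_rank_one_derivative_general {n : ℕ} (X P : Matrix (Fin n) (Fin n) ℝ) (u v : Fin n)
    (Pinv : ℝ → Matrix (Fin n) (Fin n) ℝ)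
    (hrow : ∃ w : Fin n → ℝ,
      Matrix.vecMul w X = (Pi.single v (1:ℝ) - Pi.single u 1 : Fin n → ℝ))
    (hP : IsMoorePenrose X P)
    (hPinv : ∀ ε : ℝ, IsMoorePenrose
        (X + ε • vecMulVec (Pi.single u (1:ℝ)) (Pi.single v (1:ℝ) - Pi.single u 1))
        (Pinv ε)) :
    Filter.Tendsto (fun ε : ℝ => ε⁻¹ • (Pinv ε - P)) (nhdsWithin 0 {0}ᶜ)
      (nhds (P * Pᵀ * vecMulVec (Pi.single v (1:ℝ) - Pi.single u 1) (Pi.single u 1)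
              * (1 - X * P)
            - P * vecMulVec (Pi.single u (1:ℝ)) (Pi.single v (1:ℝ) - Pi.single u 1) * P)) := by
  obtain ⟨w, hw⟩ := hrow
  exact tendsto_slope_pinv_add_smul_vecMulVec hP (hw ▸ hP.vecMul_mul_eq_self) hPinv

/-- Derivative of the Moore-Penrose pseudoinverse at X in the rank-one direction e_u χᵀ,
for χ = e_v - e_u in the row space of X. -/
theorem pinv_rank_one_derivative {n : ℕ} (X P : Matrix (Fin n) (Fin n) ℝ) (u v : Fin n)
    (huv : u ≠ v)
    (Pinv : ℝ → Matrix (Fin n) (Fin n) ℝ)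
    (hrow : ∃ w : Fin n → ℝ,
      Matrix.vecMul w X = (Pi.single v (1:ℝ) - Pi.single u 1 : Fin n → ℝ))
    (hP : IsMoorePenrose X P)
    (hPinv : ∀ ε : ℝ, IsMoorePenrose
        (X + ε • vecMulVec (Pi.single u (1:ℝ)) (Pi.single v (1:ℝ) - Pi.single u 1))
        (Pinv ε))
    (hPinv0 : Pinv 0 = P) :
    Filter.Tendsto (fun ε : ℝ => ε⁻¹ • (Pinv ε - P)) (nhdsWithin 0 {0}ᶜ)
      (nhds (P * Pᵀ * vecMulVec (Pi.single v (1:ℝ) - Pi.single u 1) (Pi.single u 1)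
              * (1 - X * P)
            - P * vecMulVec (Pi.single u (1:ℝ)) (Pi.single v (1:ℝ) - Pi.single u 1) * P)) :=
  pinv_rank_one_derivative_general X P u v Pinv hrow hP hPinv
end

section
/- For a random walk on a connected undirected graph G (transition probabilities M_{uv} = 1/deg(u) for neighbors), the commute time c(u,v) = h(u,v) + h(v,u) is symmetric in u and v and is proportional to the effective resistance: c(u,v) = 2|E| · χ_{uv}ᵀ Z χ_{uv}, where Z is the Moore-Penrose pseudoinverse of the combinatorial Laplacian of G and χ_{uv} = e_u - e_v. -/
open Matrix BigOperators Filter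

/-!
Let `φ x = h x v - h x u`. The first-step recursion says that `L h(·, t)` equals the degree
vector away from `t`, and since `L` has zero column sums its value at `t` is
`deg t - 2|E|`. Hence `L φ = 2|E| χ_{uv}`, and `L Z L = L` gives
`(2|E|)² χᵀ Z χ = φᵀ L Z L φ = φᵀ L φ = 2|E| χᵀ φ = 2|E| (h u v + h v u)`.
-/

open Finset

namespace Matrix

variable {ι R : Type*} [Fintype ι]

theorem IsSymm.mulVec_dotProduct_mulVec_mulVec [CommSemiring R] {A Z : Matrix ι ι R}
    (hA : A.IsSymm) (hAZA : A * Z * A = A) (φ : ι → R) :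
    (A *ᵥ φ) ⬝ᵥ Z *ᵥ (A *ᵥ φ) = (A *ᵥ φ) ⬝ᵥ φ := by
  have hφA : φ ᵥ* A = A *ᵥ φ := by
    rw [← vecMul_transpose, hA.eq]
  rw [mulVec_mulVec, dotProduct_mulVec, ← hφA, vecMul_vecMul, ← Matrix.mul_assoc, hAZA, hφA]

theorem IsSymm.mul_dotProduct_mulVec_of_mulVec_eq_smul [CommRing R] [IsDomain R]
    {A Z : Matrix ι ι R} (hA : A.IsSymm) (hAZA : A * Z * A = A) {φ χ : ι → R} {c : R}
    (hc : c ≠ 0) (hφ : A *ᵥ φ = c • χ) :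
    c * (χ ⬝ᵥ Z *ᵥ χ) = χ ⬝ᵥ φ := by
  have hquad := hA.mulVec_dotProduct_mulVec_mulVec hAZA φ
  rw [hφ, mulVec_smul, smul_dotProduct, dotProduct_smul, smul_dotProduct, smul_eq_mul,
    smul_eq_mul, smul_eq_mul] at hquad
  exact mul_left_cancel₀ hc hquad

end Matrix

namespace SimpleGraph

variable {V : Type*} [Fintype V]

theorem Connected.card_edgeFinset_pos {G : SimpleGraph V} [DecidableRel G.Adj]
    (hconn : G.Connected) {u v : V} (huv : u ≠ v) : 0 < #G.edgeFinset := by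
  obtain ⟨p⟩ := hconn.preconnected u v
  exact card_pos.2 ⟨s(u, p.snd), by simpa using p.adj_snd (p.not_nil_of_ne huv)⟩

variable [DecidableEq V] (G : SimpleGraph V) [DecidableRel G.Adj]

theorem sum_lapMatrix_mulVec {R : Type*} [CommRing R] (f : V → R) :
    ∑ x, (G.lapMatrix R *ᵥ f) x = 0 := by
  have hcolumns : (fun _ ↦ (1 : R)) ᵥ* G.lapMatrix R = 0 := by
    rw [← mulVec_transpose, (G.isSymm_lapMatrix (R := R)).eq, lapMatrix_mulVec_const_eq_zero]
  simpa [dotProduct, hcolumns] using dotProduct_mulVec (fun _ ↦ (1 : R)) (G.lapMatrix R) f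

theorem lapMatrix_mulVec_eq_degree_sub_single {R : Type*} [CommRing R] {f : V → R} {t : V}
    (hf : ∀ x, x ≠ t → (G.lapMatrix R *ᵥ f) x = G.degree x) :
    G.lapMatrix R *ᵥ f = (fun x ↦ (G.degree x : R)) - Pi.single t (2 * #G.edgeFinset : R) := by
  ext x
  rcases eq_or_ne x t with rfl | hxt
  · have hsum := G.sum_lapMatrix_mulVec f
    have hdeg : ∑ y, (G.degree y : R) = 2 * #G.edgeFinset := by
      exact_mod_cast congrArg (Nat.cast (R := R)) G.sum_degrees_eq_twice_card_edges
    rw [← add_sum_erase _ _ (mem_univ x), sum_congr rfl fun y hy ↦ hf y (ne_of_mem_erase hy)]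
      at hsum
    rw [← add_sum_erase _ _ (mem_univ x)] at hdeg
    simp only [Pi.sub_apply, Pi.single_eq_same]
    linear_combination hsum - hdeg
  · simp [hf x hxt, hxt]

theorem lapMatrix_mulVec_apply_of_eq_one_add_average {f : V → ℝ} {x : V}
    (hf : f x = 1 + ∑ w, (if G.Adj x w then (G.degree x : ℝ)⁻¹ else 0) * f w) :
    (G.lapMatrix ℝ *ᵥ f) x = G.degree x := by
  have havg : ∑ w, (if G.Adj x w then (G.degree x : ℝ)⁻¹ else 0) * f w
      = (G.degree x : ℝ)⁻¹ * ∑ w ∈ G.neighborFinset x, f w := by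
    rw [mul_sum, neighborFinset_eq_filter, sum_filter]
    exact sum_congr rfl fun w _ ↦ by split_ifs <;> simp
  rw [lapMatrix_mulVec_apply, hf, havg]
  rcases eq_or_ne (G.degree x : ℝ) 0 with hdeg | hdeg
  · have hnbr : G.neighborFinset x = ∅ := by
      rw [← card_eq_zero, card_neighborFinset_eq_degree]
      exact_mod_cast hdeg
    simp [hdeg, hnbr]
  · field_simp
    ring

end SimpleGraph

/-- Commute time of simple random walk on a connected graph is symmetric and equals
2|E| times the effective resistance. -/
theorem commute_time_eq_resistance {n : ℕ} (G : SimpleGraph (Fin n)) [DecidableRel G.Adj]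
    (hconn : G.Connected)
    (h Z : Matrix (Fin n) (Fin n) ℝ)
    (hZ : IsMoorePenrose (G.lapMatrix ℝ) Z)
    (hdiag : ∀ v, h v v = 0)
    (hrec : ∀ u v, u ≠ v →
      h u v = 1 + ∑ w, (if G.Adj u w then ((G.degree u : ℝ))⁻¹ else 0) * h w v) :
    ∀ u v,
      (h u v + h v u = h v u + h u v) ∧
      h u v + h v u = 2 * (G.edgeFinset.card : ℝ) *
        dotProduct (Pi.single u (1:ℝ) - Pi.single v 1)
          (Z.mulVec (Pi.single u (1:ℝ) - Pi.single v 1)) := by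
  intro u v
  refine ⟨add_comm _ _, ?_⟩
  rcases eq_or_ne u v with rfl | huv
  · simp [hdiag]
  have hcol (t : Fin n) : G.lapMatrix ℝ *ᵥ (fun x ↦ h x t) =
      (fun x ↦ (G.degree x : ℝ)) - Pi.single t (2 * #G.edgeFinset : ℝ) :=
    G.lapMatrix_mulVec_eq_degree_sub_single fun x hxt ↦
      G.lapMatrix_mulVec_apply_of_eq_one_add_average (hrec x t hxt)
  have hφ : G.lapMatrix ℝ *ᵥ (fun x ↦ h x v - h x u) =
      (2 * #G.edgeFinset : ℝ) • (Pi.single u 1 - Pi.single v 1) := by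
    rw [show (fun x ↦ h x v - h x u) = (fun x ↦ h x v) - (fun x ↦ h x u) from rfl,
      mulVec_sub, hcol, hcol]
    simp only [smul_sub, ← Pi.single_smul', smul_eq_mul, mul_one]
    abel
  have hE : (2 * #G.edgeFinset : ℝ) ≠ 0 := by
    have := (hconn.card_edgeFinset_pos huv).ne'
    positivity
  rw [(G.isSymm_lapMatrix (R := ℝ)).mul_dotProduct_mulVec_of_mulVec_eq_smul hZ.1 hE hφ]
  simp [sub_dotProduct, hdiag]
end
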